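/- arXiv:2506.15717 — 5 statements merged into one kernel-verified Lean document; each statement's English description precedes it below -/
import Mathlib

section
/- Let Y be a finite nonempty set, π_ref and π_te probability mass functions on Y with full support, r : Y → ℝ, and β₁, β₂ ≥ 0 with β₁ + β₂ > 0. Define the objective J(π) = ∑_y π(y)·r(y) − β₁·D_KL(π‖π_ref) − β₂·D_KL(π‖π_te) over probability mass functions π on Y with full support, where D_KL(p‖q) = ∑_y p(y)·log(p(y)/q(y)). Then the unique maximizer of J is π*(y) = (1/Z)·π_ref(y)^{β₁/(β₁+β₂)}·π_te(y)^{β₂/(β₁+β₂)}·exp(r(y)/(β₁+β₂)), where Z is the normalizing constant. -/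
/-! The objective is `(β₁ + β₂)` times `∑ p f - ∑ p log p` for the log-linear score
`f = (β₁ log π_ref + β₂ log π_te + r) / (β₁ + β₂)`, and the Gibbs variational identity
rewrites this as `(β₁ + β₂) (log Z - KL(p ‖ π*))`, where `π* ∝ exp f` is exactly the claimed
policy. Gibbs' inequality `KL ≥ 0`, with equality only at `p = π*`, then gives existence and
uniqueness of the maximizer. -/

open Real Finset

noncomputable def KL {Y : Type*} [Fintype Y] (p q : Y → ℝ) : ℝ :=
  ∑ y, p y * Real.log (p y / q y)

open InformationTheory (klFun klFun_apply klFun_nonneg klFun_eq_zero_iff)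

section KL

variable {Y : Type*} [Fintype Y]

lemma KL_self (p : Y → ℝ) : KL p p = 0 := by
  refine Finset.sum_eq_zero fun y _ => ?_
  rcases eq_or_ne (p y) 0 with h | h
  · simp [h]
  · simp [div_self h]

lemma KL_eq_sum_mul_log_sub {p q : Y → ℝ} (hq : ∀ y, q y ≠ 0) :
    KL p q = ∑ y, p y * log (p y) - ∑ y, p y * log (q y) := by
  rw [KL, ← Finset.sum_sub_distrib]
  refine Finset.sum_congr rfl fun y _ => ?_
  rcases eq_or_ne (p y) 0 with h | h
  · simp [h]
  · rw [log_div h (hq y)]; ring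

lemma KL_eq_sum_mul_klFun {p q : Y → ℝ} (hq : ∀ y, q y ≠ 0) (hsum : ∑ y, p y = ∑ y, q y) :
    KL p q = ∑ y, q y * klFun (p y / q y) := by
  have hterm : ∀ y, q y * klFun (p y / q y) = p y * log (p y / q y) + (q y - p y) := by
    intro y
    have hpq : q y * (p y / q y) = p y := mul_div_cancel₀ _ (hq y)
    rw [klFun_apply]
    linear_combination (log (p y / q y) - 1) * hpq
  simp only [hterm, Finset.sum_add_distrib, Finset.sum_sub_distrib, hsum, sub_self, add_zero,
    KL]

lemma KL_nonneg {p q : Y → ℝ} (hp : ∀ y, 0 ≤ p y) (hq : ∀ y, 0 < q y)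
    (hsum : ∑ y, p y = ∑ y, q y) : 0 ≤ KL p q := by
  rw [KL_eq_sum_mul_klFun (fun y => (hq y).ne') hsum]
  exact Finset.sum_nonneg fun y _ =>
    mul_nonneg (hq y).le (klFun_nonneg (div_nonneg (hp y) (hq y).le))

lemma KL_eq_zero_iff {p q : Y → ℝ} (hp : ∀ y, 0 ≤ p y) (hq : ∀ y, 0 < q y)
    (hsum : ∑ y, p y = ∑ y, q y) : KL p q = 0 ↔ p = q := by
  refine ⟨fun h => ?_, fun h => h ▸ KL_self p⟩
  have hnonneg : ∀ y ∈ (univ : Finset Y), 0 ≤ q y * klFun (p y / q y) := fun y _ =>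
    mul_nonneg (hq y).le (klFun_nonneg (div_nonneg (hp y) (hq y).le))
  rw [KL_eq_sum_mul_klFun (fun y => (hq y).ne') hsum,
    Finset.sum_eq_zero_iff_of_nonneg hnonneg] at h
  funext y
  have hkl : klFun (p y / q y) = 0 :=
    (mul_eq_zero.mp (h y (mem_univ y))).resolve_left (hq y).ne'
  rw [klFun_eq_zero_iff (div_nonneg (hp y) (hq y).le), div_eq_one_iff_eq (hq y).ne'] at hkl
  exact hkl

end KL

section Gibbs

variable {Y : Type*} [Fintype Y]

noncomputable def gibbsDist (f : Y → ℝ) (y : Y) : ℝ :=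
  exp (f y) / ∑ y', exp (f y')

lemma sum_exp_pos (f : Y → ℝ) (y : Y) : 0 < ∑ y', exp (f y') :=
  Finset.sum_pos (fun y' _ => exp_pos (f y')) ⟨y, mem_univ y⟩

lemma gibbsDist_pos (f : Y → ℝ) (y : Y) : 0 < gibbsDist f y :=
  div_pos (exp_pos _) (sum_exp_pos f y)

lemma sum_gibbsDist [Nonempty Y] (f : Y → ℝ) : ∑ y, gibbsDist f y = 1 := by
  obtain ⟨y⟩ := ‹Nonempty Y›
  simp only [gibbsDist, ← Finset.sum_div, div_self (sum_exp_pos f y).ne']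

lemma log_gibbsDist (f : Y → ℝ) (y : Y) :
    log (gibbsDist f y) = f y - log (∑ y', exp (f y')) := by
  rw [gibbsDist, log_div (exp_pos _).ne' (sum_exp_pos f y).ne', log_exp]

/-- Gibbs variational identity. -/
lemma KL_gibbsDist {f p : Y → ℝ} (hp : ∑ y, p y = 1) :
    KL p (gibbsDist f) =
      ∑ y, p y * log (p y) - ∑ y, p y * f y + log (∑ y, exp (f y)) := by
  simp only [KL_eq_sum_mul_log_sub fun y => (gibbsDist_pos f y).ne', log_gibbsDist,
    mul_sub, Finset.sum_sub_distrib, ← Finset.sum_mul, hp, one_mul]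
  ring

end Gibbs

lemma rpow_mul_rpow_mul_exp {x y : ℝ} (hx : 0 < x) (hy : 0 < y) (s t u : ℝ) :
    x ^ s * y ^ t * exp u = exp (s * log x + t * log y + u) := by
  rw [rpow_def_of_pos hx, rpow_def_of_pos hy, ← exp_add, ← exp_add, mul_comm (log x),
    mul_comm (log y)]

lemma sum_mul_sub_mul_KL_sub_mul_KL {Y : Type*} [Fintype Y] {β₁ β₂ : ℝ} {a b r f : Y → ℝ}
    (ha : ∀ y, 0 < a y) (hb : ∀ y, 0 < b y)
    (hf : ∀ y, (β₁ + β₂) * f y = β₁ * log (a y) + β₂ * log (b y) + r y)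
    {p : Y → ℝ} (hp : ∑ y, p y = 1) :
    ∑ y, p y * r y - β₁ * KL p a - β₂ * KL p b =
      (β₁ + β₂) * (log (∑ y, exp (f y)) - KL p (gibbsDist f)) := by
  have hpf : (β₁ + β₂) * ∑ y, p y * f y =
      β₁ * ∑ y, p y * log (a y) + β₂ * ∑ y, p y * log (b y) + ∑ y, p y * r y := by
    simp only [Finset.mul_sum, ← Finset.sum_add_distrib]
    refine Finset.sum_congr rfl fun y _ => ?_
    linear_combination p y * hf y
  rw [KL_gibbsDist hp, KL_eq_sum_mul_log_sub fun y => (ha y).ne',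
    KL_eq_sum_mul_log_sub fun y => (hb y).ne']
  linear_combination -hpf

theorem daDPO_optimal_policy_general
    {Y : Type*} [Fintype Y] [Nonempty Y]
    (pref pte : Y → ℝ) (r : Y → ℝ) (β₁ β₂ : ℝ)
    (hβ : 0 < β₁ + β₂)
    (href_pos : ∀ y, 0 < pref y)
    (hte_pos : ∀ y, 0 < pte y)
    (Z : ℝ)
    (hZ : Z = ∑ y, pref y ^ (β₁ / (β₁ + β₂)) * pte y ^ (β₂ / (β₁ + β₂)) *
        Real.exp (r y / (β₁ + β₂)))
    (πs : Y → ℝ)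
    (hπs : ∀ y, πs y = (1 / Z) * (pref y ^ (β₁ / (β₁ + β₂)) *
        pte y ^ (β₂ / (β₁ + β₂)) * Real.exp (r y / (β₁ + β₂))))
    (J : (Y → ℝ) → ℝ)
    (hJ : ∀ p, J p = (∑ y, p y * r y) - β₁ * KL p pref - β₂ * KL p pte) :
    ∀ p : Y → ℝ, (∀ y, 0 < p y) → (∑ y, p y = 1) →
      J p ≤ J πs ∧ (J p = J πs → p = πs) := by
  set f := fun y => β₁ / (β₁ + β₂) * log (pref y) + β₂ / (β₁ + β₂) * log (pte y)
    + r y / (β₁ + β₂)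
  have hexp : ∀ y, pref y ^ (β₁ / (β₁ + β₂)) * pte y ^ (β₂ / (β₁ + β₂)) *
      exp (r y / (β₁ + β₂)) = exp (f y) := fun y =>
    rpow_mul_rpow_mul_exp (href_pos y) (hte_pos y) _ _ _
  have hf : ∀ y, (β₁ + β₂) * f y = β₁ * log (pref y) + β₂ * log (pte y) + r y := by
    intro y
    simp only [f]
    field_simp
  have hπ : πs = gibbsDist f := by
    funext y
    rw [hπs, hexp, hZ, gibbsDist, one_div_mul_eq_div]
    simp only [hexp]
  have hJ_eq : ∀ p : Y → ℝ, ∑ y, p y = 1 →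
      J p = (β₁ + β₂) * (log Z - KL p πs) := by
    intro p hp
    rw [hJ, sum_mul_sub_mul_KL_sub_mul_KL href_pos hte_pos hf hp, hπ, hZ]
    simp only [hexp]
  have hJπ : J πs = (β₁ + β₂) * log Z := by
    rw [hJ_eq πs (hπ ▸ sum_gibbsDist f), KL_self, sub_zero]
  intro p hp_pos hp
  have hsum : ∑ y, p y = ∑ y, πs y := by rw [hp, hπ, sum_gibbsDist]
  have hπ_pos : ∀ y, 0 < πs y := hπ ▸ gibbsDist_pos f
  have hKL := KL_nonneg (fun y => (hp_pos y).le) hπ_pos hsum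
  rw [hJ_eq p hp, hJπ]
  refine ⟨mul_le_mul_of_nonneg_left (sub_le_self _ hKL) hβ.le, fun h => ?_⟩
  exact (KL_eq_zero_iff (fun y => (hp_pos y).le) hπ_pos hsum).mp
    (sub_eq_self.mp (mul_left_cancel₀ hβ.ne' h))

theorem daDPO_optimal_policy
    {Y : Type*} [Fintype Y] [Nonempty Y]
    (pref pte : Y → ℝ) (r : Y → ℝ) (β₁ β₂ : ℝ)
    (hβ₁ : 0 ≤ β₁) (hβ₂ : 0 ≤ β₂) (hβ : 0 < β₁ + β₂)
    (href_pos : ∀ y, 0 < pref y) (href_sum : ∑ y, pref y = 1)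
    (hte_pos : ∀ y, 0 < pte y) (hte_sum : ∑ y, pte y = 1)
    (Z : ℝ)
    (hZ : Z = ∑ y, pref y ^ (β₁ / (β₁ + β₂)) * pte y ^ (β₂ / (β₁ + β₂)) *
        Real.exp (r y / (β₁ + β₂)))
    (πs : Y → ℝ)
    (hπs : ∀ y, πs y = (1 / Z) * (pref y ^ (β₁ / (β₁ + β₂)) *
        pte y ^ (β₂ / (β₁ + β₂)) * Real.exp (r y / (β₁ + β₂))))
    (J : (Y → ℝ) → ℝ)
    (hJ : ∀ p, J p = (∑ y, p y * r y) - β₁ * KL p pref - β₂ * KL p pte) :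
    ∀ p : Y → ℝ, (∀ y, 0 < p y) → (∑ y, p y = 1) →
      J p ≤ J πs ∧ (J p = J πs → p = πs) :=
  daDPO_optimal_policy_general pref pte r β₁ β₂ hβ href_pos hte_pos Z hZ πs hπs J hJ
end

section
/- Let Y be a finite nonempty set, π_ref, π_te probability mass functions on Y with full support, r : Y → ℝ, β₁, β₂ ≥ 0 with β₁ + β₂ > 0, and π* the daDPO optimal policy. Under the Bradley–Terry model p(y₁ ≻ y₂) = σ(r(y₁) − r(y₂)) with σ(t) = 1/(1+e^{−t}), the preference probability satisfies p(y₁ ≻ y₂) = σ( (β₁+β₂)·log π*(y₁) − β₁·log π_ref(y₁) − β₂·log π_te(y₁) − (β₁+β₂)·log π*(y₂) + β₁·log π_ref(y₂) + β₂·log π_te(y₂) ), i.e., the normalizer log Z cancels. -/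
open Real Finset

noncomputable def sigmoid (t : ℝ) : ℝ := 1 / (1 + Real.exp (-t))

theorem daDPO_preference_probability
    {Y : Type*} [Fintype Y] [Nonempty Y]
    (pref pte : Y → ℝ) (r : Y → ℝ) (β₁ β₂ : ℝ)
    (hβ₁ : 0 ≤ β₁) (hβ₂ : 0 ≤ β₂) (hβ : 0 < β₁ + β₂)
    (href_pos : ∀ y, 0 < pref y) (href_sum : ∑ y, pref y = 1)
    (hte_pos : ∀ y, 0 < pte y) (hte_sum : ∑ y, pte y = 1)
    (Z : ℝ)
    (hZ : Z = ∑ y, pref y ^ (β₁ / (β₁ + β₂)) * pte y ^ (β₂ / (β₁ + β₂)) *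
        Real.exp (r y / (β₁ + β₂)))
    (πs : Y → ℝ)
    (hπs : ∀ y, πs y = (1 / Z) * (pref y ^ (β₁ / (β₁ + β₂)) *
        pte y ^ (β₂ / (β₁ + β₂)) * Real.exp (r y / (β₁ + β₂)))) :
    ∀ y₁ y₂ : Y,
      _root_.sigmoid (r y₁ - r y₂)
        = _root_.sigmoid ((β₁ + β₂) * Real.log (πs y₁) - β₁ * Real.log (pref y₁)
            - β₂ * Real.log (pte y₁)
            - ((β₁ + β₂) * Real.log (πs y₂) - β₁ * Real.log (pref y₂)
            - β₂ * Real.log (pte y₂))) := by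
  have hZpos : 0 < Z := by
    rw [hZ]
    apply Finset.sum_pos
    · intro y _
      have h1 := href_pos y
      have h2 := hte_pos y
      positivity
    · exact Finset.univ_nonempty
  have key : ∀ y, (β₁ + β₂) * Real.log (πs y) - β₁ * Real.log (pref y)
      - β₂ * Real.log (pte y) = r y - (β₁ + β₂) * Real.log Z := by
    intro y
    have h1 := href_pos y
    have h2 := hte_pos y
    rw [hπs y, Real.log_mul (by positivity) (by positivity),
      Real.log_mul (by positivity) (by positivity),
      Real.log_mul (by positivity) (by positivity),
      Real.log_rpow (href_pos y), Real.log_rpow (hte_pos y), Real.log_exp,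
      one_div, Real.log_inv]
    field_simp
    ring
  intro y₁ y₂
  rw [key y₁, key y₂]
  ring_nf
end

section
/- Let Y be a finite nonempty set, π_ref, π_te full-support probability mass functions on Y, r : Y → ℝ, and β₁, β₂ ≥ 0 with β₁ + β₂ > 0. Let π* be the daDPO optimal policy. Then for any two y₁, y₂ ∈ Y, the difference of implicit rewards satisfies r(y₁) − r(y₂) = (β₁+β₂)·log(π*(y₁)/π*(y₂)) − β₁·log(π_ref(y₁)/π_ref(y₂)) − β₂·log(π_te(y₁)/π_te(y₂)), and this expression is independent of the normalizer Z. -/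
/-! The normalizer `Z` cancels in the ratio `π*(y₁) / π*(y₂)`, and `(β₁ + β₂) * log` of the
unnormalized weight `π_ref^(β₁/(β₁+β₂)) · π_te^(β₂/(β₁+β₂)) · exp (r/(β₁+β₂))` is
`β₁ log π_ref + β₂ log π_te + r`; subtracting this identity at `y₂` from the one at `y₁` gives
the reward difference. -/

open Real Finset

lemma Real.log_rpow_mul_rpow_mul_exp {p q : ℝ} (hp : 0 < p) (hq : 0 < q) (a b s : ℝ) :
    log (p ^ a * q ^ b * exp s) = a * log p + b * log q + s := by
  have hpa : 0 < p ^ a := rpow_pos_of_pos hp a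
  have hqb : 0 < q ^ b := rpow_pos_of_pos hq b
  rw [log_mul (mul_pos hpa hqb).ne' (exp_pos s).ne', log_mul hpa.ne' hqb.ne',
    log_rpow hp, log_rpow hq, log_exp]

lemma Real.add_mul_log_rpow_div_mul_rpow_div_mul_exp_div {p q β₁ β₂ : ℝ} (hp : 0 < p)
    (hq : 0 < q) (hβ : β₁ + β₂ ≠ 0) (s : ℝ) :
    (β₁ + β₂) * log (p ^ (β₁ / (β₁ + β₂)) * q ^ (β₂ / (β₁ + β₂)) * exp (s / (β₁ + β₂))) =
      β₁ * log p + β₂ * log q + s := by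
  rw [log_rpow_mul_rpow_mul_exp hp hq]
  field_simp

theorem daDPO_reward_difference_general
    {Y : Type*} [Fintype Y]
    (pref pte : Y → ℝ) (r : Y → ℝ) (β₁ β₂ : ℝ)
    (hβ : 0 < β₁ + β₂)
    (href_pos : ∀ y, 0 < pref y)
    (hte_pos : ∀ y, 0 < pte y)
    (Z : ℝ)
    (hZ : Z = ∑ y, pref y ^ (β₁ / (β₁ + β₂)) * pte y ^ (β₂ / (β₁ + β₂)) *
        Real.exp (r y / (β₁ + β₂)))
    (πs : Y → ℝ)
    (hπs : ∀ y, πs y = (1 / Z) * (pref y ^ (β₁ / (β₁ + β₂)) *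
        pte y ^ (β₂ / (β₁ + β₂)) * Real.exp (r y / (β₁ + β₂)))) :
    ∀ y₁ y₂ : Y,
      r y₁ - r y₂ = (β₁ + β₂) * Real.log (πs y₁ / πs y₂)
        - β₁ * Real.log (pref y₁ / pref y₂)
        - β₂ * Real.log (pte y₁ / pte y₂) := by
  intro y₁ y₂
  set w : Y → ℝ := fun y ↦
    pref y ^ (β₁ / (β₁ + β₂)) * pte y ^ (β₂ / (β₁ + β₂)) * exp (r y / (β₁ + β₂))
  have hw_pos (y : Y) : 0 < w y := by
    have := href_pos y
    have := hte_pos y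
    positivity
  have hZ_ne : Z ≠ 0 := hZ ▸ (sum_pos (fun y _ ↦ hw_pos y) ⟨y₁, mem_univ y₁⟩).ne'
  have hratio : πs y₁ / πs y₂ = w y₁ / w y₂ := by
    rw [hπs, hπs, mul_div_mul_left _ _ (one_div_ne_zero hZ_ne)]
  have hlog_w (y : Y) : (β₁ + β₂) * log (w y) = β₁ * log (pref y) + β₂ * log (pte y) + r y :=
    add_mul_log_rpow_div_mul_rpow_div_mul_exp_div (href_pos y) (hte_pos y) hβ.ne' (r y)
  rw [hratio, log_div (hw_pos y₁).ne' (hw_pos y₂).ne', mul_sub, hlog_w, hlog_w,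
    log_div (href_pos y₁).ne' (href_pos y₂).ne', log_div (hte_pos y₁).ne' (hte_pos y₂).ne']
  ring

theorem daDPO_reward_difference
    {Y : Type*} [Fintype Y] [Nonempty Y]
    (pref pte : Y → ℝ) (r : Y → ℝ) (β₁ β₂ : ℝ)
    (hβ₁ : 0 ≤ β₁) (hβ₂ : 0 ≤ β₂) (hβ : 0 < β₁ + β₂)
    (href_pos : ∀ y, 0 < pref y) (href_sum : ∑ y, pref y = 1)
    (hte_pos : ∀ y, 0 < pte y) (hte_sum : ∑ y, pte y = 1)
    (Z : ℝ)
    (hZ : Z = ∑ y, pref y ^ (β₁ / (β₁ + β₂)) * pte y ^ (β₂ / (β₁ + β₂)) *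
        Real.exp (r y / (β₁ + β₂)))
    (πs : Y → ℝ)
    (hπs : ∀ y, πs y = (1 / Z) * (pref y ^ (β₁ / (β₁ + β₂)) *
        pte y ^ (β₂ / (β₁ + β₂)) * Real.exp (r y / (β₁ + β₂)))) :
    ∀ y₁ y₂ : Y,
      r y₁ - r y₂ = (β₁ + β₂) * Real.log (πs y₁ / πs y₂)
        - β₁ * Real.log (pref y₁ / pref y₂)
        - β₂ * Real.log (pte y₁ / pte y₂) :=
  daDPO_reward_difference_general pref pte r β₁ β₂ hβ href_pos hte_pos Z hZ πs hπs
end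

section
/- Let Y be a finite nonempty set, π_te a full-support probability mass function on Y, r : Y → ℝ, and β > 0. The maximizer π*(y) ∝ π_te(y)·exp(r(y)/β) of the rDPO objective ∑_y π(y)·r(y) − β·D_KL(π‖π_te) satisfies r(y₁) − r(y₂) = β·(log(π*(y₁)/π_te(y₁)) − log(π*(y₂)/π_te(y₂))) for all y₁, y₂ ∈ Y; consequently the Bradley–Terry preference probability equals σ(β·log(π*(y₁)/π_te(y₁)) − β·log(π*(y₂)/π_te(y₂))). -/
open Real Finset

theorem rDPO_reward_reparameterization
    {Y : Type*} [Fintype Y] [Nonempty Y]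
    (pte : Y → ℝ) (r : Y → ℝ) (β : ℝ) (hβ : 0 < β)
    (hte_pos : ∀ y, 0 < pte y) (hte_sum : ∑ y, pte y = 1)
    (πs : Y → ℝ)
    (hπs : ∀ y, πs y = pte y * Real.exp (r y / β)
        / ∑ y', pte y' * Real.exp (r y' / β)) :
    ∀ y₁ y₂ : Y,
      (r y₁ - r y₂ = β * (Real.log (πs y₁ / pte y₁) - Real.log (πs y₂ / pte y₂))) ∧
      (_root_.sigmoid (r y₁ - r y₂)
        = _root_.sigmoid (β * Real.log (πs y₁ / pte y₁) - β * Real.log (πs y₂ / pte y₂))) := by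
  have hZ : 0 < ∑ y', pte y' * Real.exp (r y' / β) :=
    Finset.sum_pos (fun y _ => mul_pos (hte_pos y) (Real.exp_pos _)) Finset.univ_nonempty
  have key : ∀ y, Real.log (πs y / pte y)
      = r y / β - Real.log (∑ y', pte y' * Real.exp (r y' / β)) := by
    intro y
    have : πs y / pte y = Real.exp (r y / β) / ∑ y', pte y' * Real.exp (r y' / β) := by
      rw [hπs y, div_div, mul_comm (∑ y', pte y' * Real.exp (r y' / β)) (pte y),
        mul_div_mul_left _ _ (hte_pos y).ne']
    rw [this, Real.log_div (Real.exp_ne_zero _) (ne_of_gt hZ), Real.log_exp]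
  intro y₁ y₂
  have h1 : r y₁ - r y₂ = β * (Real.log (πs y₁ / pte y₁) - Real.log (πs y₂ / pte y₂)) := by
    rw [key, key]
    field_simp
    ring
  exact ⟨h1, by rw [h1]; ring_nf⟩
end

section
/- Let Y be a finite nonempty set, π_ref, π_te full-support probability mass functions on Y, r : Y → ℝ bounded, and for β₁ > 0, β₂ ≥ 0 let π*(β₁,β₂) be the daDPO optimal policy. Fixing β₂ ≥ 0 and the ratio structure, as β₁ + β₂ → ∞ with β₂/(β₁+β₂) → λ ∈ [0,1], the optimal policy π* converges pointwise to the geometric mixture μ_λ(y) = π_ref(y)^{1−λ}π_te(y)^{λ}/W_λ. -/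
open Real Finset Filter

theorem daDPO_strong_regularization_limit
    {Y : Type*} [Fintype Y] [Nonempty Y]
    (pref pte : Y → ℝ) (r : Y → ℝ)
    (href_pos : ∀ y, 0 < pref y) (href_sum : ∑ y, pref y = 1)
    (hte_pos : ∀ y, 0 < pte y) (hte_sum : ∑ y, pte y = 1)
    (M : ℝ) (hr_bdd : ∀ y, |r y| ≤ M)
    (lam : ℝ) (hlam : lam ∈ Set.Icc (0 : ℝ) 1)
    (b₁ b₂ : ℕ → ℝ)
    (hb₁ : ∀ n, 0 < b₁ n) (hb₂ : ∀ n, 0 ≤ b₂ n)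
    (hsum : Tendsto (fun n => b₁ n + b₂ n) atTop atTop)
    (hratio : Tendsto (fun n => b₂ n / (b₁ n + b₂ n)) atTop (nhds lam))
    (πs : ℕ → Y → ℝ)
    (hπs : ∀ n y, πs n y =
      (pref y ^ (b₁ n / (b₁ n + b₂ n)) * pte y ^ (b₂ n / (b₁ n + b₂ n)) *
        Real.exp (r y / (b₁ n + b₂ n))) /
      ∑ y', pref y' ^ (b₁ n / (b₁ n + b₂ n)) * pte y' ^ (b₂ n / (b₁ n + b₂ n)) *
        Real.exp (r y' / (b₁ n + b₂ n))) :
    ∀ y, Tendsto (fun n => πs n y) atTop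
      (nhds (pref y ^ (1 - lam) * pte y ^ lam /
        ∑ y', pref y' ^ (1 - lam) * pte y' ^ lam)) := by
  have hs_pos : ∀ n, 0 < b₁ n + b₂ n := fun n => add_pos_of_pos_of_nonneg (hb₁ n) (hb₂ n)
  have h1 : Tendsto (fun n => b₁ n / (b₁ n + b₂ n)) atTop (nhds (1 - lam)) := by
    have : (fun n => b₁ n / (b₁ n + b₂ n)) = fun n => 1 - b₂ n / (b₁ n + b₂ n) := by
      funext n
      field_simp [(hs_pos n).ne']
      ring
    rw [this]
    exact tendsto_const_nhds.sub hratio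
  -- limit of each term
  have hterm : ∀ z : Y, Tendsto (fun n => pref z ^ (b₁ n / (b₁ n + b₂ n)) *
      pte z ^ (b₂ n / (b₁ n + b₂ n)) * Real.exp (r z / (b₁ n + b₂ n))) atTop
      (nhds (pref z ^ (1 - lam) * pte z ^ lam)) := by
    intro z
    have hA : Tendsto (fun n => pref z ^ (b₁ n / (b₁ n + b₂ n))) atTop
        (nhds (pref z ^ (1 - lam))) :=
      (Real.continuousAt_const_rpow (href_pos z).ne').tendsto.comp h1
    have hB : Tendsto (fun n => pte z ^ (b₂ n / (b₁ n + b₂ n))) atTop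
        (nhds (pte z ^ lam)) :=
      (Real.continuousAt_const_rpow (hte_pos z).ne').tendsto.comp hratio
    have hC : Tendsto (fun n => Real.exp (r z / (b₁ n + b₂ n))) atTop (nhds 1) := by
      have h0 : Tendsto (fun n => r z / (b₁ n + b₂ n)) atTop (nhds 0) :=
        Tendsto.div_atTop tendsto_const_nhds hsum
      have := (Real.continuous_exp.tendsto 0).comp h0
      simpa [Function.comp_def] using this
    simpa using (hA.mul hB).mul hC
  have hden : Tendsto (fun n => ∑ y', pref y' ^ (b₁ n / (b₁ n + b₂ n)) *
      pte y' ^ (b₂ n / (b₁ n + b₂ n)) * Real.exp (r y' / (b₁ n + b₂ n))) atTop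
      (nhds (∑ y', pref y' ^ (1 - lam) * pte y' ^ lam)) :=
    tendsto_finset_sum _ (fun z _ => hterm z)
  have hden_pos : 0 < ∑ y' : Y, pref y' ^ (1 - lam) * pte y' ^ lam := by
    apply Finset.sum_pos
    · intro z _
      exact mul_pos (Real.rpow_pos_of_pos (href_pos z) _) (Real.rpow_pos_of_pos (hte_pos z) _)
    · exact Finset.univ_nonempty
  intro y
  have := (hterm y).div hden hden_pos.ne'
  simpa [hπs, Pi.div_def] using this
end
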